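/- arXiv:2006.15694 — 6 statements merged into one kernel-verified Lean document; each statement's English description precedes it below -/
import Mathlib

section
/- Let θ be a positive integer, G a graph, and ℮ an edge-tangle of order θ in G. If [A,B] and [C,D] are in ℮ and the order of the edge-cut [A∪C, B∩D] is less than θ, then [A∪C, B∩D] is in ℮. -/
/-- A finite multigraph (loops and parallel edges allowed): each edge in `E`
has an unordered pair of endpoints in `V`. -/
structure Multigraph (V E : Type) where
  ends : E → Sym2 V

namespace Multigraph

variable {V E : Type}

/-- The edge `e` has an end in the vertex set `A`. -/
def incident (G : Multigraph V E) (A : Set V) (e : E) : Prop :=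
  ∃ x ∈ G.ends e, x ∈ A

/-- The edge `e` has one end in `A` and one end in `B`. -/
def crosses (G : Multigraph V E) (A B : Set V) (e : E) : Prop :=
  G.incident A e ∧ G.incident B e

/-- The order of the edge-cut `[A,B]`: the number of edges with one end in `A`
and one end in `B`. -/
noncomputable def cutOrder (G : Multigraph V E) (A B : Set V) : ℕ :=
  {e | G.crosses A B e}.ncard

/-- `[A,B]` is an edge-cut of `G`: an ordered pair of disjoint vertex sets
covering all vertices. -/
def IsCut (G : Multigraph V E) (A B : Set V) : Prop :=
  Disjoint A B ∧ A ∪ B = Set.univ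

end Multigraph

/-- An edge-tangle of order `θ` in `G`: a set of edge-cuts of order less than
`θ` satisfying axioms (E1)-(E3). -/
structure EdgeTangle {V E : Type} (G : Multigraph V E) (θ : ℕ) where
  mem : Set V → Set V → Prop
  isCut_of_mem : ∀ A B, mem A B → G.IsCut A B
  order_lt_of_mem : ∀ A B, mem A B → G.cutOrder A B < θ
  e1 : ∀ A B, G.IsCut A B → G.cutOrder A B < θ → mem A B ∨ mem B A
  e2 : ∀ A₁ B₁ A₂ B₂ A₃ B₃, mem A₁ B₁ → mem A₂ B₂ → mem A₃ B₃ →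
    (B₁ ∩ B₂ ∩ B₃).Nonempty
  e3 : ∀ A B, mem A B → θ ≤ {e | G.incident B e}.ncard

/-- Let `θ` be a positive integer, `G` a graph, and `ℰ` an
edge-tangle of order `θ` in `G`. If `[A,B]` and `[C,D]` are in `ℰ` and the
order of the edge-cut `[A∪C, B∩D]` is less than `θ`, then `[A∪C, B∩D]` is in
`ℰ`. -/
theorem edgeTangle_mem_union_inter {V E : Type} [Fintype V] [Fintype E]
    (G : Multigraph V E) (θ : ℕ) (hθ : 0 < θ) (ℰ : EdgeTangle G θ)
    (A B C D : Set V) (hAB : ℰ.mem A B) (hCD : ℰ.mem C D)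
    (h : G.cutOrder (A ∪ C) (B ∩ D) < θ) :
    ℰ.mem (A ∪ C) (B ∩ D) := by
  obtain ⟨hABd, hABu⟩ := ℰ.isCut_of_mem A B hAB
  obtain ⟨hCDd, hCDu⟩ := ℰ.isCut_of_mem C D hCD
  have hcut : G.IsCut (A ∪ C) (B ∩ D) := by
    constructor
    · rw [Set.disjoint_left]
      rintro x (hx | hx) ⟨hB, hD⟩
      · exact hABd.le_bot ⟨hx, hB⟩
      · exact hCDd.le_bot ⟨hx, hD⟩
    · ext x
      simp only [Set.mem_union, Set.mem_inter_iff, Set.mem_univ, iff_true]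
      by_cases hA : x ∈ A
      · exact Or.inl (Or.inl hA)
      by_cases hC : x ∈ C
      · exact Or.inl (Or.inr hC)
      refine Or.inr ⟨?_, ?_⟩
      · have := hABu ▸ Set.mem_univ x; rcases this with h'|h' <;> tauto
      · have := hCDu ▸ Set.mem_univ x; rcases this with h'|h' <;> tauto
  rcases ℰ.e1 _ _ hcut h with h' | h'
  · exact h'
  · exfalso
    obtain ⟨x, ⟨hB, hD⟩, hx⟩ := ℰ.e2 A B C D (B ∩ D) (A ∪ C) hAB hCD h'
    rcases hx with hA | hC
    · exact hABd.le_bot ⟨hA, hB⟩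
    · exact hCDd.le_bot ⟨hC, hD⟩
end

section
/- Let G be a graph, θ a positive integer, ℮ an edge-tangle of order θ in G, and X a set of edges of G with |X| < θ. Then ℮ − X, defined as the set of edge-cuts [A,B] of G−X of order (in G−X) less than θ − |X| such that [A,B] ∈ ℮, is an edge-tangle of order θ − |X| in G−X. -/
/-- The graph obtained from `G` by deleting the edges in `X`. -/
def Multigraph.deleteEdges {V E : Type} (G : Multigraph V E) (X : Set E) :
    Multigraph V {e : E // e ∉ X} :=
  ⟨fun e => G.ends e.1⟩

/-- Let `G` be a graph, `θ` a positive integer, `ℰ` an edge-tangle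
of order `θ` in `G`, and `X` a set of edges of `G` with `|X| < θ`. Then
`ℰ − X`, the set of edge-cuts `[A,B]` of `G − X` of order (in `G − X`) less
than `θ − |X|` such that `[A,B] ∈ ℰ`, is an edge-tangle of order `θ − |X|` in
`G − X`. -/
theorem edgeTangle_deleteEdges {V E : Type} [Fintype V] [Fintype E]
    (G : Multigraph V E) (θ : ℕ) (hθ : 0 < θ) (ℰ : EdgeTangle G θ)
    (X : Set E) (hX : X.ncard < θ) :
    ∃ ℰ' : EdgeTangle (G.deleteEdges X) (θ - X.ncard),
      ∀ A B : Set V, ℰ'.mem A B ↔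
        ((G.deleteEdges X).IsCut A B ∧
          (G.deleteEdges X).cutOrder A B < θ - X.ncard ∧ ℰ.mem A B) := by
  classical
  have hcard : ∀ (P : E → Prop),
      {e : {e : E // e ∉ X} | P e.1}.ncard = ({e | P e} \ X).ncard := by
    intro P
    rw [← Set.ncard_image_of_injective _ Subtype.val_injective]
    congr 1
    ext e
    constructor
    · rintro ⟨⟨a, ha⟩, hP, rfl⟩; exact ⟨hP, ha⟩
    · rintro ⟨hP, he⟩; exact ⟨⟨e, he⟩, hP, rfl⟩
  have key : ∀ S : Set E, S.ncard ≤ (S \ X).ncard + X.ncard := by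
    intro S
    calc S.ncard ≤ ((S \ X) ∪ X).ncard :=
          Set.ncard_le_ncard (fun e he => by
            by_cases h : e ∈ X <;> simp [he, h]) (Set.toFinite _)
      _ ≤ _ := Set.ncard_union_le _ _
  have hco : ∀ A B : Set V, (G.deleteEdges X).cutOrder A B
      = ({e | G.crosses A B e} \ X).ncard := fun A B =>
    hcard (fun e => G.crosses A B e)
  refine ⟨⟨fun A B => (G.deleteEdges X).IsCut A B ∧
      (G.deleteEdges X).cutOrder A B < θ - X.ncard ∧ ℰ.mem A B,
      fun A B h => h.1, fun A B h => h.2.1, ?_, ?_, ?_⟩, fun A B => Iff.rfl⟩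
  · -- e1
    intro A B hcut hord
    have hG : G.cutOrder A B < θ := by
      have h1 := key {e | G.crosses A B e}
      have h2 := hco A B
      have h3 : G.cutOrder A B = {e | G.crosses A B e}.ncard := rfl
      omega
    have hsymm : (G.deleteEdges X).cutOrder B A = (G.deleteEdges X).cutOrder A B := by
      unfold Multigraph.cutOrder
      congr 1
      ext e
      exact and_comm
    rcases ℰ.e1 A B hcut hG with h | h
    · exact Or.inl ⟨hcut, hord, h⟩
    · exact Or.inr ⟨⟨hcut.1.symm, by rw [Set.union_comm]; exact hcut.2⟩,
        by omega, h⟩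
  · intro A₁ B₁ A₂ B₂ A₃ B₃ h1 h2 h3
    exact ℰ.e2 _ _ _ _ _ _ h1.2.2 h2.2.2 h3.2.2
  · intro A B h
    have h3 := ℰ.e3 A B h.2.2
    have h4 : {e : {e : E // e ∉ X} | (G.deleteEdges X).incident B e}.ncard
        = ({e | G.incident B e} \ X).ncard := hcard (fun e => G.incident B e)
    have h5 := key {e | G.incident B e}
    omega
end

section
/- Let (T,𝒳) be a tree-cut decomposition of a graph G and θ a positive integer. Then (T,𝒳) is θ-smooth if and only if for every C that is a node of T or a θ-cell of (T,𝒳), there exists no edge-cut [A,B] of G of order less than θ such that each of A and B is incident with at least (order of [A,B]) + 1 edges of the torso at C. -/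
/-- A tree-cut decomposition of `G`: a (finite) tree `T` together with pairwise
disjoint bags partitioning `V(G)`. -/
structure TreeCutDecomp {V E : Type} (G : Multigraph V E) (T : Type) where
  tree : SimpleGraph T
  isTree : tree.IsTree
  finite : Finite T
  bag : T → Set V
  disjoint_bags : ∀ s t : T, s ≠ t → Disjoint (bag s) (bag t)
  cover : ∀ v : V, ∃ t : T, v ∈ bag t

namespace TreeCutDecomp

variable {V E T : Type} {G : Multigraph V E}

/-- The set of nodes of the component of `T - t₁t₂` containing `t₁`. -/
def side (D : TreeCutDecomp G T) (t₁ t₂ : T) : Set T :=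
  {s | Relation.ReflTransGen
    (fun x y => D.tree.Adj x y ∧ ¬(x = t₁ ∧ y = t₂) ∧ ¬(x = t₂ ∧ y = t₁)) t₁ s}

/-- The union of the bags over the component of `T - t₁t₂` containing `t₁`. -/
def sideBags (D : TreeCutDecomp G T) (t₁ t₂ : T) : Set V :=
  ⋃ s ∈ D.side t₁ t₂, D.bag s

/-- The adhesion set of the tree edge `t₁t₂`: the edges of `G` with one end in
the bags on the `t₁` side and one end in the bags on the `t₂` side. -/
def adhEdges (D : TreeCutDecomp G T) (t₁ t₂ : T) : Set E :=
  {e | G.crosses (D.sideBags t₁ t₂) (D.sideBags t₂ t₁) e}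

/-- `x` and `y` are joined by a path of `T` avoiding the node set `C`. -/
def compRel (D : TreeCutDecomp G T) (C : Set T) (x y : T) : Prop :=
  Relation.ReflTransGen (fun a b => D.tree.Adj a b ∧ a ∉ C ∧ b ∉ C) x y

/-- The union of the bags over the component of `T - C` containing `s`. -/
def compBags (D : TreeCutDecomp G T) (C : Set T) (s : T) : Set V :=
  ⋃ s' ∈ {s' | D.compRel C s s'}, D.bag s'

/-- The edges of the torso at `C`, viewed as edges of `G`: those edges having
no component of `T - C` whose bags contain all their ends. -/
def torsoEdges (D : TreeCutDecomp G T) (C : Set T) : Set E :=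
  {e | ¬ ∃ s : T, s ∉ C ∧ ∀ x ∈ G.ends e, x ∈ D.compBags C s}

/-- `x` and `y` are joined in the forest obtained from `T` by deleting all edges
whose adhesion set has fewer than `θ` elements. -/
def cellRel (D : TreeCutDecomp G T) (θ : ℕ) (x y : T) : Prop :=
  Relation.ReflTransGen (fun a b => D.tree.Adj a b ∧ θ ≤ (D.adhEdges a b).ncard) x y

/-- A pseudo-`θ`-cell: a component of the forest obtained from `T` by deleting
all edges whose adhesion set has size less than `θ`. -/
def IsPseudoCell (D : TreeCutDecomp G T) (θ : ℕ) (C : Set T) : Prop :=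
  ∃ t : T, C = {s | D.cellRel θ t s}

/-- A `θ`-cell: a pseudo-`θ`-cell whose torso has at least `θ` edges. -/
def IsCell (D : TreeCutDecomp G T) (θ : ℕ) (C : Set T) : Prop :=
  D.IsPseudoCell θ C ∧ θ ≤ (D.torsoEdges C).ncard

/-- `(T,𝒳)` is `θ`-smooth. -/
def Smooth (D : TreeCutDecomp G T) (θ : ℕ) : Prop :=
  ∀ C : Set T, (D.IsCell θ C ∨ ∃ t : T, C = {t}) →
    ∀ Y Z : Set E, Y ⊆ D.torsoEdges C → Z ⊆ D.torsoEdges C →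
      Y.ncard = Z.ncard → Y.ncard ≤ θ →
      ¬ ∃ A B : Set V, G.IsCut A B ∧ G.cutOrder A B < Y.ncard ∧
        (∀ e ∈ Y, G.incident A e) ∧ (∀ e ∈ Z, G.incident B e)

end TreeCutDecomp

theorem Set.exists_equicard_subsets_iff {α : Type*} {s t : Set α} (hs : s.Finite)
    (ht : t.Finite) {k θ : ℕ} :
    (∃ Y ⊆ s, ∃ Z ⊆ t, Y.ncard = Z.ncard ∧ Y.ncard ≤ θ ∧ k < Y.ncard) ↔
      k < θ ∧ k + 1 ≤ s.ncard ∧ k + 1 ≤ t.ncard := by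
  constructor
  · rintro ⟨Y, hYs, Z, hZt, hYZ, hYθ, hkY⟩
    exact ⟨hkY.trans_le hYθ, hkY.trans_le (Set.ncard_le_ncard hYs hs),
      (hYZ ▸ hkY).trans_le (Set.ncard_le_ncard hZt ht)⟩
  · rintro ⟨hkθ, hks, hkt⟩
    obtain ⟨Y, hYs, hY⟩ := Set.exists_subset_card_eq hks
    obtain ⟨Z, hZt, hZ⟩ := Set.exists_subset_card_eq hkt
    exact ⟨Y, hYs, Z, hZt, hY.trans hZ.symm, hY ▸ hkθ, hY ▸ k.lt_succ_self⟩

namespace TreeCutDecomp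

variable {V E T : Type} {G : Multigraph V E}

theorem smooth_iff_forall_not_exists_cut (D : TreeCutDecomp G T) (θ : ℕ) :
    D.Smooth θ ↔
      ∀ C : Set T, (D.IsCell θ C ∨ ∃ t : T, C = {t}) →
        ¬ ∃ A B : Set V, G.IsCut A B ∧
          ∃ Y ⊆ {e | e ∈ D.torsoEdges C ∧ G.incident A e},
          ∃ Z ⊆ {e | e ∈ D.torsoEdges C ∧ G.incident B e},
            Y.ncard = Z.ncard ∧ Y.ncard ≤ θ ∧ G.cutOrder A B < Y.ncard := by
  refine forall₂_congr fun C _ => ⟨?_, ?_⟩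
  · rintro hS ⟨A, B, hcut, Y, hY, Z, hZ, hYZ, hYθ, hord⟩
    exact hS Y Z (fun e he => (hY he).1) (fun e he => (hZ he).1) hYZ hYθ
      ⟨A, B, hcut, hord, fun e he => (hY he).2, fun e he => (hZ he).2⟩
  · rintro hS Y Z hY hZ hYZ hYθ ⟨A, B, hcut, hord, hAY, hBZ⟩
    exact hS ⟨A, B, hcut, Y, fun e he => ⟨hY he, hAY e he⟩,
      Z, fun e he => ⟨hZ he, hBZ e he⟩, hYZ, hYθ, hord⟩

end TreeCutDecomp

theorem thetaSmooth_iff_general {V E T : Type} [Fintype E]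
    (G : Multigraph V E) (D : TreeCutDecomp G T) (θ : ℕ) :
    D.Smooth θ ↔
      ∀ C : Set T, (D.IsCell θ C ∨ ∃ t : T, C = {t}) →
        ¬ ∃ A B : Set V, G.IsCut A B ∧ G.cutOrder A B < θ ∧
          G.cutOrder A B + 1 ≤ {e | e ∈ D.torsoEdges C ∧ G.incident A e}.ncard ∧
          G.cutOrder A B + 1 ≤ {e | e ∈ D.torsoEdges C ∧ G.incident B e}.ncard := by
  rw [D.smooth_iff_forall_not_exists_cut θ]
  refine forall₂_congr fun C _ => not_congr <| exists₂_congr fun A B =>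
    and_congr_right fun _ => Set.exists_equicard_subsets_iff (Set.toFinite _) (Set.toFinite _)

/-- `(T,𝒳)` is `θ`-smooth if and only if for every `C` that is a
node of `T` or a `θ`-cell of `(T,𝒳)`, there exists no edge-cut `[A,B]` of `G`
of order less than `θ` such that each of `A` and `B` is incident with at least
`|[A,B]| + 1` edges of the torso at `C`. -/
theorem thetaSmooth_iff {V E T : Type} [Fintype V] [Fintype E]
    (G : Multigraph V E) (D : TreeCutDecomp G T) (θ : ℕ) (hθ : 0 < θ) :
    D.Smooth θ ↔
      ∀ C : Set T, (D.IsCell θ C ∨ ∃ t : T, C = {t}) →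
        ¬ ∃ A B : Set V, G.IsCut A B ∧ G.cutOrder A B < θ ∧
          G.cutOrder A B + 1 ≤ {e | e ∈ D.torsoEdges C ∧ G.incident A e}.ncard ∧
          G.cutOrder A B + 1 ≤ {e | e ∈ D.torsoEdges C ∧ G.incident B e}.ncard :=
  thetaSmooth_iff_general G D θ
end

section
/- Let G be a graph, θ a positive integer, (T,𝒳) a θ-smooth tree-cut decomposition of G, and L a θ-cell whose torso has at least 3θ − 2 edges. Let ℮ be the collection of edge-cuts [A,B] of G of order less than θ such that A is incident with at most (order of [A,B]) edges of the torso at L. Then ℮ is an edge-tangle of order θ in G. -/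
/-! The torso edges of the cell form a set `F` such that every edge-cut `[A,B]` of order less
than `θ` has a side incident with at most `|[A,B]|` edges of `F` (this is what smoothness says),
so the cuts whose `A`-side is the small one are an orientation (E1). Since every edge has an end,
the sides `A₁, A₂, A₃` of three such cuts with disjoint `B`-sides would be incident with all of
`F`, with at most `3(θ - 1) < 3θ - 2 ≤ |F|` edges in total (E2). Likewise `A` and `B` together
are incident with all of `F`, so `B` is incident with at least `|F| - (θ - 1) ≥ θ` edges (E3). -/

namespace Multigraph

variable {V E : Type} (G : Multigraph V E)

def incidentSet (A : Set V) : Set E :=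
  {e | G.incident A e}

lemma incidentSet_union (A B : Set V) :
    G.incidentSet (A ∪ B) = G.incidentSet A ∪ G.incidentSet B := by
  ext e
  simp only [incidentSet, incident, Set.mem_ofPred_eq, Set.mem_union, ← exists_or, and_or_left]

lemma incidentSet_univ : G.incidentSet Set.univ = Set.univ := by
  ext e
  exact iff_of_true ⟨(G.ends e).out.1, Sym2.out_fst_mem _, trivial⟩ trivial

lemma ncard_inter_incidentSet_union_le (F : Set E) (A B : Set V) :
    (F ∩ G.incidentSet (A ∪ B)).ncard ≤
      (F ∩ G.incidentSet A).ncard + (F ∩ G.incidentSet B).ncard := by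
  rw [incidentSet_union, Set.inter_union_distrib_left]
  exact Set.ncard_union_le _ _

lemma ncard_le_of_union_eq_univ (F : Set E) {A B : Set V} (h : A ∪ B = Set.univ) :
    F.ncard ≤ (F ∩ G.incidentSet A).ncard + (F ∩ G.incidentSet B).ncard := by
  simpa only [h, incidentSet_univ, Set.inter_univ] using G.ncard_inter_incidentSet_union_le F A B

lemma cutOrder_comm (A B : Set V) : G.cutOrder B A = G.cutOrder A B := by
  simp only [cutOrder, crosses, and_comm]

variable {G}

lemma IsCut.symm {A B : Set V} (h : G.IsCut A B) : G.IsCut B A :=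
  ⟨h.1.symm, Set.union_comm A B ▸ h.2⟩

lemma IsCut.compl_eq {A B : Set V} (h : G.IsCut A B) : Aᶜ = B :=
  (IsCompl.of_eq (Set.disjoint_iff_inter_eq_empty.1 h.1) h.2).compl_eq

variable (G)

def Unbreakable (F : Set E) (θ : ℕ) : Prop :=
  ∀ A B, G.IsCut A B → G.cutOrder A B < θ →
    (F ∩ G.incidentSet A).ncard ≤ G.cutOrder A B ∨ (F ∩ G.incidentSet B).ncard ≤ G.cutOrder A B

def IsSmallSide (F : Set E) (θ : ℕ) (A B : Set V) : Prop :=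
  G.IsCut A B ∧ G.cutOrder A B < θ ∧ (F ∩ G.incidentSet A).ncard ≤ G.cutOrder A B

variable {G} {F : Set E} {θ : ℕ}

lemma Unbreakable.isSmallSide_or_isSmallSide (hF : G.Unbreakable F θ) {A B : Set V}
    (hcut : G.IsCut A B) (hlt : G.cutOrder A B < θ) :
    G.IsSmallSide F θ A B ∨ G.IsSmallSide F θ B A := by
  rw [IsSmallSide, IsSmallSide, G.cutOrder_comm A B]
  exact (hF A B hcut hlt).imp (⟨hcut, hlt, ·⟩) (⟨hcut.symm, hlt, ·⟩)

lemma IsSmallSide.nonempty_inter (hF : 3 * θ - 2 ≤ F.ncard) {A₁ B₁ A₂ B₂ A₃ B₃ : Set V}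
    (h₁ : G.IsSmallSide F θ A₁ B₁) (h₂ : G.IsSmallSide F θ A₂ B₂)
    (h₃ : G.IsSmallSide F θ A₃ B₃) : (B₁ ∩ B₂ ∩ B₃).Nonempty := by
  by_contra hB
  have hA : A₁ ∪ A₂ ∪ A₃ = Set.univ := by
    rw [← h₁.1.compl_eq, ← h₂.1.compl_eq, ← h₃.1.compl_eq, Set.not_nonempty_iff_eq_empty] at hB
    rw [← compl_compl A₁, ← compl_compl A₂, ← compl_compl A₃, ← Set.compl_inter,
      ← Set.compl_inter, hB, Set.compl_empty]
  have hcover := G.ncard_le_of_union_eq_univ F hA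
  have h₁₂ := G.ncard_inter_incidentSet_union_le F A₁ A₂
  obtain ⟨-, hlt₁, hle₁⟩ := h₁
  obtain ⟨-, hlt₂, hle₂⟩ := h₂
  obtain ⟨-, hlt₃, hle₃⟩ := h₃
  omega

lemma IsSmallSide.le_ncard_incidentSet [Finite E] (hF : 2 * θ - 1 ≤ F.ncard) {A B : Set V}
    (h : G.IsSmallSide F θ A B) : θ ≤ (G.incidentSet B).ncard := by
  obtain ⟨hcut, hlt, hle⟩ := h
  have hcover := G.ncard_le_of_union_eq_univ F hcut.2
  have hB := Set.ncard_le_ncard (Set.inter_subset_right : F ∩ G.incidentSet B ⊆ _)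
  omega

end Multigraph

def EdgeTangle.ofUnbreakable {V E : Type} [Finite E] (G : Multigraph V E) {F : Set E} {θ : ℕ}
    (hF : G.Unbreakable F θ) (hfat : 3 * θ - 2 ≤ F.ncard) : EdgeTangle G θ where
  mem := G.IsSmallSide F θ
  isCut_of_mem _ _ h := h.1
  order_lt_of_mem _ _ h := h.2.1
  e1 _ _ := hF.isSmallSide_or_isSmallSide
  e2 _ _ _ _ _ _ := Multigraph.IsSmallSide.nonempty_inter hfat
  e3 _ _ h := h.le_ncard_incidentSet (by have := h.2.1; omega)

lemma TreeCutDecomp.Smooth.unbreakable_torsoEdges {V E T : Type} {G : Multigraph V E}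
    {D : TreeCutDecomp G T} {θ : ℕ} (hsmooth : D.Smooth θ) {C : Set T}
    (hC : D.IsCell θ C ∨ ∃ t : T, C = {t}) : G.Unbreakable (D.torsoEdges C) θ := by
  intro A B hcut hlt
  by_contra! hbig
  obtain ⟨Y, hY, hYcard⟩ := Set.exists_subset_card_eq hbig.1
  obtain ⟨Z, hZ, hZcard⟩ := Set.exists_subset_card_eq hbig.2
  exact hsmooth C hC Y Z (hY.trans Set.inter_subset_left) (hZ.trans Set.inter_subset_left)
    (hYcard.trans hZcard.symm) (hYcard ▸ hlt)
    ⟨A, B, hcut, hYcard ▸ Nat.lt_succ_self _, fun e he => (hY he).2, fun e he => (hZ he).2⟩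

theorem fat_cell_edgeTangle_general {V E T : Type} [Fintype E]
    (G : Multigraph V E) (θ : ℕ) (D : TreeCutDecomp G T)
    (hsmooth : D.Smooth θ) (L : Set T) (hL : D.IsCell θ L)
    (hfat : 3 * θ - 2 ≤ (D.torsoEdges L).ncard) :
    ∃ ℰ : EdgeTangle G θ, ∀ A B : Set V,
      ℰ.mem A B ↔ (G.IsCut A B ∧ G.cutOrder A B < θ ∧
        {e | e ∈ D.torsoEdges L ∧ G.incident A e}.ncard ≤ G.cutOrder A B) :=
  ⟨.ofUnbreakable G (hsmooth.unbreakable_torsoEdges (.inl hL)) hfat, fun _ _ => Iff.rfl⟩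

/-- Let `G` be a graph, `θ` a positive integer, `(T,𝒳)` a
`θ`-smooth tree-cut decomposition of `G`, and `L` a `θ`-cell whose torso has at
least `3θ − 2` edges. Then the collection of edge-cuts `[A,B]` of `G` of order
less than `θ` such that `A` is incident with at most `|[A,B]|` edges of the
torso at `L` is an edge-tangle of order `θ` in `G`. -/
theorem fat_cell_edgeTangle {V E T : Type} [Fintype V] [Fintype E]
    (G : Multigraph V E) (θ : ℕ) (hθ : 0 < θ) (D : TreeCutDecomp G T)
    (hsmooth : D.Smooth θ) (L : Set T) (hL : D.IsCell θ L)
    (hfat : 3 * θ - 2 ≤ (D.torsoEdges L).ncard) :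
    ∃ ℰ : EdgeTangle G θ, ∀ A B : Set V,
      ℰ.mem A B ↔ (G.IsCut A B ∧ G.cutOrder A B < θ ∧
        {e | e ∈ D.torsoEdges L ∧ G.incident A e}.ncard ≤ G.cutOrder A B) :=
  fat_cell_edgeTangle_general G θ D hsmooth L hL hfat
end

section
/- Let G be a graph, θ a positive integer, ℮ an edge-tangle of order θ in G, and (T,𝒳) a tree-cut decomposition of G. Then there exists a unique θ-cell C of (T,𝒳) (where we allow pseudo-θ-cells and prove the selected one is a θ-cell) such that for every edge e of T with at most one end in V(C) and with adhesion set of size less than θ, the edge-cut [A_{e,C}, B_{e,C}] belongs to ℮, where B_{e,C} is the union of the bags in the component of T−e containing C and A_{e,C} is its complement. -/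
/-!
Orient every tree edge of adhesion less than `θ` towards the side on which `ℰ` lives, that
is, towards the bags forming the `B`-side of its cut in `ℰ`. The `B`-sides of two members
of `ℰ` meet and the sides of tree edges are nested, so some node `t` lies on the `ℰ`-side
of every oriented edge; the pseudo-cell `C` of `t` then has every small edge with `C` on
one side oriented towards `C`. A second pseudo-cell with this property would be separated
from `C` by a boundary edge of `C`, necessarily small, which the two properties orient in
opposite directions.

If the torso of `C` had fewer than `θ` edges, every union of components of `T - C` would
span a cut of torso edges, of order less than `θ`. Each component is the far side of a
boundary edge of `C`, whose cut lies in `ℰ`, and (E2) forbids a union of two `A`-sides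
from being a `B`-side; so adding the components one at a time yields a member of `ℰ` whose
`B`-side is the bags of `C`, which are incident with fewer than `θ` edges, contradicting
(E3).
-/

theorem Relation.ReflTransGen.exists_exit {α : Type*} {r : α → α → Prop} {S : Set α}
    {x y : α} (h : Relation.ReflTransGen r x y) (hx : x ∈ S) (hy : y ∉ S) :
    ∃ u v, Relation.ReflTransGen (fun a b => r a b ∧ a ∈ S ∧ b ∈ S) x u ∧
      r u v ∧ u ∈ S ∧ v ∉ S := by
  by_contra! hexit
  suffices ∀ z, Relation.ReflTransGen r x z →
      z ∈ S ∧ Relation.ReflTransGen (fun a b => r a b ∧ a ∈ S ∧ b ∈ S) x z from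
    hy (this y h).1
  intro z hz
  induction hz with
  | refl => exact ⟨hx, .refl⟩
  | tail _ hstep ih =>
    have hS := hexit _ _ ih.2 hstep ih.1
    exact ⟨hS, ih.2.tail ⟨hstep, ih.1, hS⟩⟩

namespace SimpleGraph

variable {V : Type*} {G H : SimpleGraph V} {a b u v x y : V}

lemma deleteEdges_adj_of_ne (h : G.Adj u v) (hu : u ≠ b) (hv : v ≠ b) :
    (G.deleteEdges {s(a, b)}).Adj u v := by
  refine (deleteEdges_adj ..).2 ⟨h, ?_⟩
  rw [Set.mem_singleton_iff, Sym2.eq_iff]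
  rintro (⟨-, rfl⟩ | ⟨rfl, -⟩) <;> contradiction

lemma Reachable.deleteEdges_of_forall_ne (hHG : H ≤ G) (h : H.Reachable x y)
    (hb : ∀ z, H.Reachable x z → z ≠ b) : (G.deleteEdges {s(a, b)}).Reachable x y := by
  rw [reachable_iff_reflTransGen] at h ⊢
  induction h with
  | refl => rfl
  | tail hxu huv ih =>
    have hxu' := (reachable_iff_reflTransGen _ _).2 hxu
    exact ih.tail
      (deleteEdges_adj_of_ne (hHG huv) (hb _ hxu') (hb _ (hxu'.trans huv.reachable)))

end SimpleGraph

namespace Multigraph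

variable {V E : Type} (G : Multigraph V E)

lemma isCut_compl (A : Set V) : G.IsCut A Aᶜ :=
  ⟨disjoint_compl_right, Set.union_compl_self A⟩

lemma not_incident_empty (e : E) : ¬ G.incident ∅ e := fun ⟨_, _, hx⟩ => hx

lemma incident_mono {A B : Set V} (hAB : A ⊆ B) {e : E} (h : G.incident A e) :
    G.incident B e :=
  let ⟨x, hxe, hxA⟩ := h; ⟨x, hxe, hAB hxA⟩

end Multigraph

namespace TreeCutDecomp

open Relation SimpleGraph

variable {V E T : Type} {G : Multigraph V E} (D : TreeCutDecomp G T) {θ : ℕ}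

lemma adhEdges_comm (a b : T) : D.adhEdges a b = D.adhEdges b a := by
  ext e; exact and_comm

lemma mem_side_iff {a b s : T} :
    s ∈ D.side a b ↔ (D.tree.deleteEdges {s(a, b)}).Reachable a s := by
  rw [reachable_iff_reflTransGen]
  suffices (D.tree.deleteEdges {s(a, b)}).Adj =
      fun x y => D.tree.Adj x y ∧ ¬(x = a ∧ y = b) ∧ ¬(x = b ∧ y = a) by
    rw [this]; rfl
  ext x y
  simp [not_or]

lemma mem_side_self (a b : T) : a ∈ D.side a b := ReflTransGen.refl

lemma mem_side_of_reflTransGen {r : T → T → Prop} {a b x y : T}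
    (hr : ∀ u v, r u v → (D.tree.deleteEdges {s(a, b)}).Adj u v)
    (hx : x ∈ D.side a b) (h : ReflTransGen r x y) : y ∈ D.side a b := by
  rw [mem_side_iff] at hx ⊢
  exact hx.trans ((reachable_iff_reflTransGen _ _).2 (ReflTransGen.mono hr _ _ h))

lemma mem_side_or_mem_side {a b : T} (hab : D.tree.Adj a b) (s : T) :
    s ∈ D.side a b ∨ s ∈ D.side b a := by
  have hs := (reachable_iff_reflTransGen a s).1 (D.isTree.connected.preconnected a s)
  simp only [mem_side_iff, Sym2.eq_swap (a := b)]
  induction hs with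
  | refl => exact .inl .rfl
  | @tail u v _ huv ih =>
    by_cases he : s(u, v) = s(a, b)
    · rcases Sym2.eq_iff.1 he with ⟨-, rfl⟩ | ⟨-, rfl⟩
      · exact .inr .rfl
      · exact .inl .rfl
    · have huv' : (D.tree.deleteEdges {s(a, b)}).Adj u v := (deleteEdges_adj ..).2 ⟨huv, he⟩
      exact ih.imp (·.trans huv'.reachable) (·.trans huv'.reachable)

lemma disjoint_side {a b : T} (hab : D.tree.Adj a b) : Disjoint (D.side a b) (D.side b a) := by
  refine Set.disjoint_left.2 fun s hsa hsb => ?_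
  rw [mem_side_iff] at hsa hsb
  rw [Sym2.eq_swap] at hsb
  exact isBridge_iff.1 (isAcyclic_iff_forall_adj_isBridge.1 D.isTree.isAcyclic hab)
    (hsa.trans hsb.symm)

lemma side_swap {a b : T} (hab : D.tree.Adj a b) : D.side b a = (D.side a b)ᶜ := by
  ext s
  refine ⟨fun hb ha => Set.disjoint_left.1 (D.disjoint_side hab) ha hb, fun ha => ?_⟩
  exact (D.mem_side_or_mem_side hab s).resolve_left ha

lemma side_subset_side_of_not_mem {a b c d t : T} (htb : t ∈ D.side b a) (htc : t ∈ D.side c d)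
    (ha : a ∉ D.side c d) : D.side c d ⊆ D.side b a := by
  intro s hs
  rw [mem_side_iff] at htb htc hs ⊢
  refine htb.trans ((htc.symm.trans hs).deleteEdges_of_forall_ne (deleteEdges_le _) ?_)
  rintro z hz rfl
  exact ha ((D.mem_side_iff).2 (htc.trans hz))

def cellOf (θ : ℕ) (t : T) : Set T := {s | D.cellRel θ t s}

lemma mem_cellOf_self (t : T) : t ∈ D.cellOf θ t := ReflTransGen.refl

lemma cellRel_symm {x y : T} (h : D.cellRel θ x y) : D.cellRel θ y x := by
  have : Std.Symm fun u v => D.tree.Adj u v ∧ θ ≤ (D.adhEdges u v).ncard :=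
    ⟨fun u v ⟨huv, hθ⟩ => ⟨huv.symm, by rwa [adhEdges_comm]⟩⟩
  exact Std.Symm.symm (r := ReflTransGen _) _ _ h

lemma compRel_symm {C : Set T} {x y : T} (h : D.compRel C x y) : D.compRel C y x := by
  have : Std.Symm fun u v => D.tree.Adj u v ∧ u ∉ C ∧ v ∉ C :=
    ⟨fun _ _ ⟨huv, hu, hv⟩ => ⟨huv.symm, hv, hu⟩⟩
  exact Std.Symm.symm (r := ReflTransGen _) _ _ h

lemma cellOf_eq_of_mem {t t' : T} (h : t' ∈ D.cellOf θ t) : D.cellOf θ t' = D.cellOf θ t := by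
  ext s
  exact ⟨fun hs => ReflTransGen.trans h hs, fun hs => ReflTransGen.trans (D.cellRel_symm h) hs⟩

lemma cellOf_subset_side {a b t : T} (hsmall : (D.adhEdges a b).ncard < θ)
    (ht : t ∈ D.side a b) : D.cellOf θ t ⊆ D.side a b := by
  refine fun s hs => D.mem_side_of_reflTransGen (fun u v ⟨huv, hbig⟩ => ?_) ht hs
  refine (deleteEdges_adj ..).2 ⟨huv, fun he => ?_⟩
  rcases Sym2.eq_iff.1 he with ⟨rfl, rfl⟩ | ⟨rfl, rfl⟩
  · omega
  · rw [adhEdges_comm] at hbig; omega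

variable {D} in
lemma adhEdges_ncard_lt {a b t : T} (hab : D.tree.Adj a b) (ha : a ∉ D.cellOf θ t)
    (hb : b ∈ D.cellOf θ t) : (D.adhEdges a b).ncard < θ := by
  by_contra! hbig
  exact ha (ReflTransGen.tail hb ⟨hab.symm, by rwa [adhEdges_comm]⟩)

variable {D} in
lemma cellOf_subset_side_of_adj {a b t : T} (hab : D.tree.Adj a b) (ha : a ∉ D.cellOf θ t)
    (hb : b ∈ D.cellOf θ t) : D.cellOf θ t ⊆ D.side b a := by
  rw [← D.cellOf_eq_of_mem hb]
  exact D.cellOf_subset_side (by rw [adhEdges_comm]; exact adhEdges_ncard_lt hab ha hb)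
    (D.mem_side_self b a)

def boundary (C : Set T) : Set (T × T) := {p | D.tree.Adj p.1 p.2 ∧ p.1 ∉ C ∧ p.2 ∈ C}

lemma mem_side_of_compRel {C : Set T} {a b s s' : T} (hb : b ∈ C) (hs : s ∈ D.side a b)
    (h : D.compRel C s s') : s' ∈ D.side a b :=
  D.mem_side_of_reflTransGen (fun _ _ ⟨huv, hu, hv⟩ => deleteEdges_adj_of_ne huv
    (ne_of_mem_of_not_mem hb hu).symm (ne_of_mem_of_not_mem hb hv).symm) hs h

lemma compl_subset_iUnion_side {C : Set T} {t : T} (ht : t ∈ C) :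
    Cᶜ ⊆ ⋃ p ∈ D.boundary C, D.side p.1 p.2 := by
  intro s hs
  have hst := (reachable_iff_reflTransGen s t).1 (D.isTree.connected.preconnected s t)
  obtain ⟨a, b, hsa, hab, ha, hb⟩ := hst.exists_exit hs (not_not.2 ht)
  refine Set.mem_biUnion (x := (a, b)) ⟨hab, ha, not_not.1 hb⟩ ?_
  refine D.mem_side_of_reflTransGen (r := Function.swap _) (fun u v ⟨huv, hv, hu⟩ => ?_)
    (D.mem_side_self a b) (ReflTransGen.swap _ _ hsa)
  exact deleteEdges_adj_of_ne huv.symm (ne_of_mem_of_not_mem (not_not.1 hb) hu).symm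
    (ne_of_mem_of_not_mem (not_not.1 hb) hv).symm

def bags (U : Set T) : Set V := ⋃ s ∈ U, D.bag s

lemma mem_bags {U : Set T} {v : V} : v ∈ D.bags U ↔ ∃ s ∈ U, v ∈ D.bag s := by
  simp [bags]

lemma bags_mono {U W : Set T} (h : U ⊆ W) : D.bags U ⊆ D.bags W :=
  Set.biUnion_subset_biUnion_left h

lemma sideBags_eq_bags (a b : T) : D.sideBags a b = D.bags (D.side a b) := rfl

lemma eq_of_mem_bag {v : V} {s s' : T} (h : v ∈ D.bag s) (h' : v ∈ D.bag s') : s = s' := by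
  by_contra hne
  exact Set.disjoint_left.1 (D.disjoint_bags s s' hne) h h'

lemma bags_compl (U : Set T) : D.bags Uᶜ = (D.bags U)ᶜ := by
  ext v
  simp only [mem_bags, Set.mem_compl_iff, not_exists, not_and]
  refine ⟨fun ⟨s, hs, hv⟩ s' hs' hv' => hs (D.eq_of_mem_bag hv hv' ▸ hs'), fun h => ?_⟩
  obtain ⟨s, hs⟩ := D.cover v
  exact ⟨s, fun hsU => h s hsU hs, hs⟩

lemma bags_biUnion {ι : Type*} (J : Set ι) (U : ι → Set T) :
    D.bags (⋃ i ∈ J, U i) = ⋃ i ∈ J, D.bags (U i) := by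
  ext v
  simp only [mem_bags, Set.mem_iUnion, exists_prop]
  aesop

lemma sideBags_swap {a b : T} (hab : D.tree.Adj a b) :
    D.sideBags b a = (D.sideBags a b)ᶜ := by
  rw [sideBags_eq_bags, sideBags_eq_bags, D.side_swap hab, bags_compl]

lemma incident_subset_torsoEdges (C : Set T) :
    {e | G.incident (D.bags C) e} ⊆ D.torsoEdges C := by
  rintro e ⟨x, hxe, hx⟩ ⟨s, hs, hends⟩
  obtain ⟨s₁, hs₁, hxs₁⟩ := D.mem_bags.1 hx
  obtain ⟨s₂, hss₂, hxs₂⟩ := D.mem_bags.1 (hends x hxe)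
  have hs₂ : s₂ ∉ C := by
    induction hss₂ with
    | refl => exact hs
    | tail _ hstep _ => exact hstep.2.2
  exact hs₂ (D.eq_of_mem_bag hxs₁ hxs₂ ▸ hs₁)

lemma crosses_subset_torsoEdges {C U : Set T}
    (hU : ∀ s ∈ U, ∀ s', D.compRel C s s' → s' ∈ U) :
    {e | G.crosses (D.bags U) (D.bags U)ᶜ e} ⊆ D.torsoEdges C := by
  rintro e ⟨⟨x, hxe, hx⟩, ⟨y, hye, hy⟩⟩ ⟨s, -, hends⟩
  obtain ⟨sx, hsx, hxsx⟩ := D.mem_bags.1 hx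
  obtain ⟨sx', hssx', hxsx'⟩ := D.mem_bags.1 (hends x hxe)
  obtain ⟨sy, hssy, hysy⟩ := D.mem_bags.1 (hends y hye)
  obtain rfl := D.eq_of_mem_bag hxsx hxsx'
  exact hy (D.mem_bags.2 ⟨sy, hU sx hsx sy ((D.compRel_symm hssx').trans hssy), hysy⟩)

lemma crosses_biUnion_sideBags_subset_torsoEdges {C : Set T} {J : Set (T × T)}
    (hJ : J ⊆ D.boundary C) :
    {e | G.crosses (⋃ p ∈ J, D.sideBags p.1 p.2) (⋃ p ∈ J, D.sideBags p.1 p.2)ᶜ e} ⊆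
      D.torsoEdges C := by
  simp only [sideBags_eq_bags, ← bags_biUnion]
  refine D.crosses_subset_torsoEdges fun s hs s' hss' => ?_
  obtain ⟨p, hp, hsp⟩ := Set.mem_iUnion₂.1 hs
  exact Set.mem_biUnion hp (D.mem_side_of_compRel (hJ hp).2.2 hsp hss')

lemma compl_biUnion_sideBags_subset {C : Set T} {t : T} (ht : t ∈ C) :
    (⋃ p ∈ D.boundary C, D.sideBags p.1 p.2)ᶜ ⊆ D.bags C := by
  simp only [sideBags_eq_bags, ← bags_biUnion, ← bags_compl]
  exact D.bags_mono (Set.compl_subset_comm.1 (D.compl_subset_iUnion_side ht))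

end TreeCutDecomp

namespace EdgeTangle

open TreeCutDecomp

variable {V E T : Type} {G : Multigraph V E} {θ : ℕ} (ℰ : EdgeTangle G θ)

lemma not_mem_swap {A B : Set V} (h : ℰ.mem A B) : ¬ ℰ.mem B A := fun h' =>
  let ⟨_, ⟨hB, hA⟩, _⟩ := ℰ.e2 _ _ _ _ _ _ h h' h
  Set.disjoint_left.1 (ℰ.isCut_of_mem A B h).1 hA hB

lemma mem_empty_univ (hθ : 0 < θ) : ℰ.mem ∅ Set.univ := by
  have hcut : G.IsCut ∅ Set.univ := by simpa using G.isCut_compl ∅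
  have horder : G.cutOrder ∅ Set.univ < θ := by
    simpa [Multigraph.cutOrder, Multigraph.crosses, G.not_incident_empty] using hθ
  refine (ℰ.e1 _ _ hcut horder).resolve_right fun h => ?_
  have := ℰ.e3 _ _ h
  simp [G.not_incident_empty] at this
  omega

lemma mem_union {A₁ A₂ : Set V} (h₁ : ℰ.mem A₁ A₁ᶜ) (h₂ : ℰ.mem A₂ A₂ᶜ)
    (horder : G.cutOrder (A₁ ∪ A₂) (A₁ ∪ A₂)ᶜ < θ) :
    ℰ.mem (A₁ ∪ A₂) (A₁ ∪ A₂)ᶜ := by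
  refine (ℰ.e1 _ _ (G.isCut_compl _) horder).resolve_right fun h => ?_
  obtain ⟨v, ⟨hv₁, hv₂⟩, hv⟩ := ℰ.e2 _ _ _ _ _ _ h₁ h₂ h
  exact hv.elim hv₁ hv₂

lemma mem_biUnion {ι : Type*} {I : Set ι} (hI : I.Finite) {X : ι → Set V}
    (hX : ∀ i ∈ I, ℰ.mem (X i) (X i)ᶜ)
    (horder : ∀ J ⊆ I, G.cutOrder (⋃ i ∈ J, X i) (⋃ i ∈ J, X i)ᶜ < θ) :
    ℰ.mem (⋃ i ∈ I, X i) (⋃ i ∈ I, X i)ᶜ := by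
  refine Set.Finite.induction_on_subset I hI
    (motive := fun J _ => ℰ.mem (⋃ i ∈ J, X i) (⋃ i ∈ J, X i)ᶜ) ?_ ?_
  · simpa using ℰ.mem_empty_univ (Nat.zero_lt_of_lt (horder ∅ (Set.empty_subset I)))
  · intro i J hi hJ _ ih
    have := horder _ (Set.insert_subset hi hJ)
    rw [Set.biUnion_insert] at this ⊢
    exact ℰ.mem_union (hX i hi) ih this

lemma side_inter_side_nonempty (D : TreeCutDecomp G T) {a b c d : T}
    (h₁ : ℰ.mem (D.sideBags b a) (D.sideBags a b))
    (h₂ : ℰ.mem (D.sideBags d c) (D.sideBags c d)) :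
    (D.side a b ∩ D.side c d).Nonempty := by
  obtain ⟨v, ⟨hv₁, hv₂⟩, -⟩ := ℰ.e2 _ _ _ _ _ _ h₁ h₂ h₁
  obtain ⟨s, hs, hvs⟩ := D.mem_bags.1 hv₁
  obtain ⟨s', hs', hvs'⟩ := D.mem_bags.1 hv₂
  exact ⟨s, hs, D.eq_of_mem_bag hvs' hvs ▸ hs'⟩

def PointsTo (D : TreeCutDecomp G T) (C : Set T) : Prop :=
  ∀ a b : T, D.tree.Adj a b → (D.adhEdges a b).ncard < θ → C ⊆ D.side a b →
    ℰ.mem (D.sideBags b a) (D.sideBags a b)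

/-- Take `t` maximising the number of edges `ab` oriented towards `a` with `t` on the side of
`a`: moving `t` across an edge oriented away from it would gain that edge and lose none. -/
lemma exists_forall_mem_side (D : TreeCutDecomp G T) : ∃ t : T, ∀ a b : T, D.tree.Adj a b →
    ℰ.mem (D.sideBags b a) (D.sideBags a b) → t ∈ D.side a b := by
  have := D.finite
  have : Nonempty T := D.isTree.connected.nonempty
  let S : T → Set (T × T) := fun t => {p | D.tree.Adj p.1 p.2 ∧
    ℰ.mem (D.sideBags p.2 p.1) (D.sideBags p.1 p.2) ∧ t ∈ D.side p.1 p.2}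
  obtain ⟨t, hmax⟩ := Finite.exists_max fun t => (S t).ncard
  refine ⟨t, fun a b hab hmem => by_contra fun hta => ?_⟩
  have htb : t ∈ D.side b a := (D.mem_side_or_mem_side hab t).resolve_left hta
  have hsub : S t ⊆ S a := by
    rintro ⟨c, d⟩ ⟨hcd, hmem', htc⟩
    refine ⟨hcd, hmem', by_contra fun hac => ?_⟩
    obtain ⟨s, hsa, hsc⟩ := ℰ.side_inter_side_nonempty D hmem hmem'
    exact Set.disjoint_left.1 (D.disjoint_side hab) hsa
      (D.side_subset_side_of_not_mem htb htc hac hsc)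
  have hab_mem : (a, b) ∈ S a := ⟨hab, hmem, D.mem_side_self a b⟩
  have hnot : ¬ S a ⊆ S t := fun h => hta (h hab_mem).2.2
  exact (hmax a).not_gt
    (Set.ncard_lt_ncard (ssubset_of_subset_not_subset hsub hnot) (Set.toFinite _))

lemma pointsTo_of_mem {D : TreeCutDecomp G T} {t : T} {C : Set T}
    (ht : ∀ a b : T, D.tree.Adj a b → ℰ.mem (D.sideBags b a) (D.sideBags a b) →
      t ∈ D.side a b)
    (htC : t ∈ C) : ℰ.PointsTo D C := by
  intro a b hab hsmall hC
  have hcut : G.IsCut (D.sideBags a b) (D.sideBags b a) := by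
    rw [D.sideBags_swap hab]; exact G.isCut_compl _
  refine (ℰ.e1 _ _ hcut hsmall).resolve_left fun h => ?_
  exact Set.disjoint_left.1 (D.disjoint_side hab) (hC htC) (ht b a hab.symm h)

lemma le_ncard_torsoEdges [Finite E] {D : TreeCutDecomp G T} {t : T}
    (h : ℰ.PointsTo D (D.cellOf θ t)) : θ ≤ (D.torsoEdges (D.cellOf θ t)).ncard := by
  have := D.finite
  set C := D.cellOf θ t
  by_contra! hlt
  have hX : ∀ p ∈ D.boundary C, ℰ.mem (D.sideBags p.1 p.2) (D.sideBags p.1 p.2)ᶜ := by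
    rintro ⟨a, b⟩ ⟨hab, ha, hb⟩
    rw [← D.sideBags_swap hab]
    exact h b a hab.symm (by rw [adhEdges_comm]; exact adhEdges_ncard_lt hab ha hb)
      (cellOf_subset_side_of_adj hab ha hb)
  have hmem := ℰ.mem_biUnion (Set.toFinite _) hX fun J hJ => lt_of_le_of_lt
    (Set.ncard_le_ncard (D.crosses_biUnion_sideBags_subset_torsoEdges hJ) (Set.toFinite _)) hlt
  have hcover := D.compl_biUnion_sideBags_subset (D.mem_cellOf_self (θ := θ) t)
  have := (ℰ.e3 _ _ hmem).trans <| Set.ncard_le_ncard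
    (fun e he => D.incident_subset_torsoEdges C (G.incident_mono hcover he)) (Set.toFinite _)
  omega

lemma cellOf_eq_of_pointsTo {D : TreeCutDecomp G T} {t t' : T}
    (h : ℰ.PointsTo D (D.cellOf θ t)) (h' : ℰ.PointsTo D (D.cellOf θ t')) :
    D.cellOf θ t' = D.cellOf θ t := by
  by_cases ht' : t' ∈ D.cellOf θ t
  · exact D.cellOf_eq_of_mem ht'
  obtain ⟨⟨a, b⟩, ⟨hab, ha, hb⟩, ht'a⟩ :=
    Set.mem_iUnion₂.1 (D.compl_subset_iUnion_side (D.mem_cellOf_self t) ht')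
  have hsmall := adhEdges_ncard_lt hab ha hb
  exact absurd (h' a b hab hsmall (D.cellOf_subset_side hsmall ht'a))
    (ℰ.not_mem_swap
      (h b a hab.symm (by rwa [adhEdges_comm]) (cellOf_subset_side_of_adj hab ha hb)))

end EdgeTangle

theorem edgeTangle_cell_general {V E T : Type} [Fintype E]
    (G : Multigraph V E) (θ : ℕ) (ℰ : EdgeTangle G θ)
    (D : TreeCutDecomp G T) :
    ∃! C : Set T, D.IsCell θ C ∧
      ∀ a b : T, D.tree.Adj a b → (D.adhEdges a b).ncard < θ →
        C ⊆ D.side a b → ℰ.mem (D.sideBags b a) (D.sideBags a b) := by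
  obtain ⟨t, ht⟩ := ℰ.exists_forall_mem_side D
  have hC : ℰ.PointsTo D (D.cellOf θ t) := ℰ.pointsTo_of_mem ht (D.mem_cellOf_self t)
  refine ⟨D.cellOf θ t, ⟨⟨⟨t, rfl⟩, ℰ.le_ncard_torsoEdges hC⟩, hC⟩, ?_⟩
  rintro _ ⟨⟨⟨t', rfl⟩, -⟩, hC'⟩
  exact ℰ.cellOf_eq_of_pointsTo hC hC'

/-- Let `G` be a graph, `θ` a positive integer, `ℰ` an edge-tangle
of order `θ` in `G`, and `(T,𝒳)` a tree-cut decomposition of `G`. Then there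
is a unique `θ`-cell `C` of `(T,𝒳)` such that for every edge `ab` of `T` with
at most one end in `C` (i.e. with `C` contained in the side of `a`) and with
adhesion set of size less than `θ`, the edge-cut `[A_{e,C}, B_{e,C}]` belongs
to `ℰ`, where `B_{e,C}` is the union of the bags in the component of `T − ab`
containing `C` and `A_{e,C}` is the union of the bags on the other side. -/
theorem edgeTangle_cell {V E T : Type} [Fintype V] [Fintype E]
    (G : Multigraph V E) (θ : ℕ) (hθ : 0 < θ) (ℰ : EdgeTangle G θ)
    (D : TreeCutDecomp G T) :
    ∃! C : Set T, D.IsCell θ C ∧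
      ∀ a b : T, D.tree.Adj a b → (D.adhEdges a b).ncard < θ →
        C ⊆ D.side a b → ℰ.mem (D.sideBags b a) (D.sideBags a b) :=
  edgeTangle_cell_general G θ ℰ D
end

section
/- Let G be a graph, ℂ a collection of edge-tangles in G, ℮ an edge-tangle in G, and [A,B] a minimum (ℂ,℮)-separator. Then for every ℮' ∈ ℂ there exists a minimum (℮',℮)-separator [C,D] with A ⊆ C and D ⊆ B. -/
/-- An edge-tangle in `G` (of some order `ord`): a set of edge-cuts of order
less than `ord` satisfying axioms (E1)-(E3). -/
structure GTangle {V E : Type} (G : Multigraph V E) where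
  ord : ℕ
  mem : Set V → Set V → Prop
  isCut_of_mem : ∀ A B, mem A B → G.IsCut A B
  order_lt_of_mem : ∀ A B, mem A B → G.cutOrder A B < ord
  e1 : ∀ A B, G.IsCut A B → G.cutOrder A B < ord → mem A B ∨ mem B A
  e2 : ∀ A₁ B₁ A₂ B₂ A₃ B₃, mem A₁ B₁ → mem A₂ B₂ → mem A₃ B₃ →
    (B₁ ∩ B₂ ∩ B₃).Nonempty
  e3 : ∀ A B, mem A B → ord ≤ {e | G.incident B e}.ncard

/-- `[A,B]` is a `(Cs,ℰ)`-separator: `[A,B] ∈ ℰ' − ℰ` and `[B,A] ∈ ℰ − ℰ'` for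
every `ℰ' ∈ Cs`. -/
def IsSep {V E : Type} {G : Multigraph V E} (Cs : Set (GTangle G))
    (ℰ : GTangle G) (A B : Set V) : Prop :=
  ∀ ℰ' ∈ Cs, (ℰ'.mem A B ∧ ¬ ℰ.mem A B) ∧ (ℰ.mem B A ∧ ¬ ℰ'.mem B A)

/-- `[A,B]` is a minimum `(Cs,ℰ)`-separator: a `(Cs,ℰ)`-separator of minimum
order. -/
def IsMinSep {V E : Type} {G : Multigraph V E} (Cs : Set (GTangle G))
    (ℰ : GTangle G) (A B : Set V) : Prop :=
  IsSep Cs ℰ A B ∧ ∀ A' B' : Set V, IsSep Cs ℰ A' B' →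
    G.cutOrder A B ≤ G.cutOrder A' B'


open scoped Classical

section Aux
open Multigraph
variable {V E : Type}

lemma cutOrder_comm (G : Multigraph V E) (A B : Set V) : G.cutOrder A B = G.cutOrder B A := by
  unfold Multigraph.cutOrder Multigraph.crosses
  congr 1; ext e; exact and_comm

lemma compl_of_isCut {G : Multigraph V E} {A B : Set V} (h : G.IsCut A B) : B = Aᶜ := by
  obtain ⟨hd, hu⟩ := h
  ext x
  constructor
  · intro hx hA
    exact (Set.disjoint_left.mp hd hA) hx
  · intro hx
    rcases (hu ▸ Set.mem_univ x : x ∈ A ∪ B) with h | h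
    · exact absurd h hx
    · exact h

lemma isCut_compl (G : Multigraph V E) (A : Set V) : G.IsCut A Aᶜ :=
  ⟨disjoint_compl_right, Set.union_compl_self A⟩

lemma isCut_symm {G : Multigraph V E} {A B : Set V} (h : G.IsCut A B) : G.IsCut B A :=
  ⟨h.1.symm, by rw [Set.union_comm]; exact h.2⟩

lemma ncard_indicator [Fintype E] (S : Set E) : S.ncard = ∑ e : E, if e ∈ S then 1 else 0 := by
  rw [Set.ncard_eq_toFinset_card' S]
  have : S.toFinset = Finset.univ.filter (· ∈ S) := by ext e; simp
  rw [this, Finset.card_filter]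

lemma submod [Fintype E] (G : Multigraph V E) (A C : Set V) :
    G.cutOrder (A ∪ C) (A ∪ C)ᶜ + G.cutOrder (A ∩ C) (A ∩ C)ᶜ ≤
      G.cutOrder A Aᶜ + G.cutOrder C Cᶜ := by
  unfold Multigraph.cutOrder
  rw [ncard_indicator, ncard_indicator, ncard_indicator, ncard_indicator,
    ← Finset.sum_add_distrib, ← Finset.sum_add_distrib]
  apply Finset.sum_le_sum
  intro e _
  obtain ⟨u, v, huv⟩ : ∃ u v, G.ends e = s(u, v) := by
    induction G.ends e using Sym2.ind with
    | _ x y => exact ⟨x, y, rfl⟩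
  have hx : ∀ X : Set V, G.crosses X Xᶜ e ↔ ((u ∈ X ∨ v ∈ X) ∧ (u ∉ X ∨ v ∉ X)) := by
    intro X
    simp only [Multigraph.crosses, Multigraph.incident, huv, Sym2.mem_iff, Set.mem_compl_iff]
    constructor
    · rintro ⟨⟨x, hx1, hx2⟩, ⟨y, hy1, hy2⟩⟩
      constructor
      · rcases hx1 with rfl | rfl <;> [left; right] <;> exact hx2
      · rcases hy1 with rfl | rfl <;> [left; right] <;> exact hy2
    · rintro ⟨h1, h2⟩
      constructor
      · rcases h1 with h | h
        exacts [⟨u, Or.inl rfl, h⟩, ⟨v, Or.inr rfl, h⟩]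
      · rcases h2 with h | h
        exacts [⟨u, Or.inl rfl, h⟩, ⟨v, Or.inr rfl, h⟩]
  simp only [Set.mem_setOf_eq, hx]
  by_cases hp : u ∈ A <;> by_cases hq : v ∈ A <;> by_cases hr : u ∈ C <;> by_cases hs : v ∈ C <;>
    simp [hp, hq, hr, hs]

lemma not_mem_swap {G : Multigraph V E} (ℰ : GTangle G) {A B : Set V}
    (h1 : ℰ.mem A B) (h2 : ℰ.mem B A) : False := by
  obtain ⟨x, hx⟩ := ℰ.e2 A B B A B A h1 h2 h2
  exact Set.disjoint_left.mp (ℰ.isCut_of_mem A B h1).1 hx.1.2 hx.1.1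

lemma union_mem {G : Multigraph V E} (ℰ : GTangle G) {A B C D : Set V}
    (h1 : ℰ.mem A B) (h2 : ℰ.mem C D) (hc : G.IsCut (A ∪ C) (B ∩ D))
    (ho : G.cutOrder (A ∪ C) (B ∩ D) < ℰ.ord) : ℰ.mem (A ∪ C) (B ∩ D) := by
  rcases ℰ.e1 _ _ hc ho with h | h
  · exact h
  · exfalso
    obtain ⟨x, hx⟩ := ℰ.e2 A B C D (B ∩ D) (A ∪ C) h1 h2 h
    rcases hx.2 with h' | h'
    · exact Set.disjoint_left.mp (ℰ.isCut_of_mem A B h1).1 h' hx.1.1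
    · exact Set.disjoint_left.mp (ℰ.isCut_of_mem C D h2).1 h' hx.1.2

lemma tangle_mono {G : Multigraph V E} (ℰ : GTangle G) {A B A' B' : Set V}
    (h1 : ℰ.mem A B) (hA : A' ⊆ A) (hB : B ⊆ B') (hc : G.IsCut A' B')
    (ho : G.cutOrder A' B' < ℰ.ord) : ℰ.mem A' B' := by
  rcases ℰ.e1 _ _ hc ho with h | h
  · exact h
  · exfalso
    obtain ⟨x, hx⟩ := ℰ.e2 A B A B B' A' h1 h1 h
    exact Set.disjoint_left.mp (ℰ.isCut_of_mem A B h1).1 (hA hx.2) hx.1.1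

end Aux

/-- Let `G` be a graph, `Cs` a collection of edge-tangles in `G`,
`ℰ` an edge-tangle in `G`, and `[A,B]` a minimum `(Cs,ℰ)`-separator. Then for
every `ℰ' ∈ Cs` there exists a minimum `(ℰ',ℰ)`-separator `[C,D]` with `A ⊆ C`
and `D ⊆ B`. -/
theorem minSep_simple_side {V E : Type} [Fintype V] [Fintype E]
    (G : Multigraph V E) (Cs : Set (GTangle G)) (ℰ : GTangle G)
    (A B : Set V) (h : IsMinSep Cs ℰ A B) :
    ∀ ℰ' ∈ Cs, ∃ C D : Set V, IsMinSep {ℰ'} ℰ C D ∧ A ⊆ C ∧ D ⊆ B := by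
  intro ℰ' hℰ'
  obtain ⟨hsep, hmin⟩ := h
  have hAB1 := hsep ℰ' hℰ'
  have hcutAB : G.IsCut A B := ℰ'.isCut_of_mem A B hAB1.1.1
  have hB : B = Aᶜ := compl_of_isCut hcutAB
  have hSepAB' : IsSep {ℰ'} ℰ A B := by
    intro ℰ'' hℰ''
    rw [Set.mem_singleton_iff] at hℰ''
    subst hℰ''
    exact hAB1
  have hex : ∃ n, ∃ C D : Set V, IsSep {ℰ'} ℰ C D ∧ G.cutOrder C D = n :=
    ⟨G.cutOrder A B, A, B, hSepAB', rfl⟩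
  obtain ⟨C, D, hCD, hCDord⟩ := Nat.find_spec hex
  have hfind_min : ∀ C' D' : Set V, IsSep {ℰ'} ℰ C' D' → Nat.find hex ≤ G.cutOrder C' D' :=
    fun C' D' hs => Nat.find_min' hex ⟨C', D', hs, rfl⟩
  have hCD1 := hCD ℰ' rfl
  have hcutCD : G.IsCut C D := ℰ'.isCut_of_mem C D hCD1.1.1
  have hD : D = Cᶜ := compl_of_isCut hcutCD
  set k := G.cutOrder A B with hk
  set m := Nat.find hex with hm
  have hmk : m ≤ k := hfind_min A B hSepAB'
  have hkE : k < ℰ.ord := by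
    have := ℰ.order_lt_of_mem B A hAB1.2.1
    rwa [cutOrder_comm] at this
  have hmE' : m < ℰ'.ord := hCDord ▸ ℰ'.order_lt_of_mem C D hCD1.1.1
  have hBD : B ∩ D = (A ∪ C)ᶜ := by rw [hB, hD, Set.compl_union]
  have hBD' : B ∪ D = (A ∩ C)ᶜ := by rw [hB, hD, Set.compl_inter]
  have hsub : G.cutOrder (A ∪ C) (B ∩ D) + G.cutOrder (A ∩ C) (B ∪ D) ≤ k + m := by
    rw [hBD, hBD']
    calc G.cutOrder (A ∪ C) (A ∪ C)ᶜ + G.cutOrder (A ∩ C) (A ∩ C)ᶜ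
        ≤ G.cutOrder A Aᶜ + G.cutOrder C Cᶜ := submod G A C
      _ = k + m := by rw [← hB, ← hD, hk, hCDord]
  have hcut1 : G.IsCut (A ∪ C) (B ∩ D) := by rw [hBD]; exact isCut_compl G _
  have hcut2 : G.IsCut (A ∩ C) (B ∪ D) := by rw [hBD']; exact isCut_compl G _
  have hk2 : ¬ G.cutOrder (A ∩ C) (B ∪ D) < k := by
    intro hlt
    have hsepNew : IsSep Cs ℰ (A ∩ C) (B ∪ D) := by
      intro ℰ'' h''
      have h1 := hsep ℰ'' h''
      have hk'' : k < ℰ''.ord := ℰ''.order_lt_of_mem A B h1.1.1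
      have hmem'' : ℰ''.mem (A ∩ C) (B ∪ D) :=
        tangle_mono ℰ'' h1.1.1 Set.inter_subset_left Set.subset_union_left hcut2
          (lt_trans hlt hk'')
      have hmemE : ℰ.mem (B ∪ D) (A ∩ C) := by
        apply union_mem ℰ h1.2.1 hCD1.2.1 (isCut_symm hcut2)
        rw [cutOrder_comm]
        exact lt_trans hlt hkE
      exact ⟨⟨hmem'', fun hbad => absurd hmemE (fun h' => not_mem_swap ℰ hbad h')⟩,
        ⟨hmemE, fun hbad => absurd hmem'' (fun h' => not_mem_swap ℰ'' h' hbad)⟩⟩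
    exact absurd (hmin _ _ hsepNew) (not_le.mpr hlt)
  have hm2 : G.cutOrder (A ∪ C) (B ∩ D) ≤ m := by omega
  refine ⟨A ∪ C, B ∩ D, ⟨?_, ?_⟩, Set.subset_union_left, Set.inter_subset_left⟩
  · intro ℰ'' hℰ''
    rw [Set.mem_singleton_iff] at hℰ''
    subst hℰ''
    have hmem' : ℰ''.mem (A ∪ C) (B ∩ D) :=
      union_mem ℰ'' hAB1.1.1 hCD1.1.1 hcut1 (lt_of_le_of_lt hm2 hmE')
    have hmemE : ℰ.mem (B ∩ D) (A ∪ C) := by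
      apply tangle_mono ℰ hCD1.2.1 Set.inter_subset_right Set.subset_union_right
        (isCut_symm hcut1)
      rw [cutOrder_comm]
      exact lt_of_le_of_lt hm2 (lt_of_le_of_lt hmk hkE)
    exact ⟨⟨hmem', fun hbad => absurd hmemE (fun h' => not_mem_swap ℰ hbad h')⟩,
      ⟨hmemE, fun hbad => absurd hmem' (fun h' => not_mem_swap ℰ'' h' hbad)⟩⟩
  · intro A' B' hs
    exact le_trans hm2 (hfind_min A' B' hs)
end
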